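/- If |v⟩ is a unit vector and A is a positive semidefinite operator with Tr A = 1, then the positive part of |v⟩⟨v| − A has rank at most 1, and consequently ‖|v⟩⟨v| − A‖₁ = 2‖|v⟩⟨v| − A‖_∞. -/

import Mathlib

open Matrix Kronecker BigOperators
open scoped ComplexOrder

/-- The old Mathlib `Matrix.PosSemidef.sqrt` (removed upstream), with its original definition. -/
noncomputable def Matrix.PosSemidef.sqrt {n 𝕜 : Type*} [Fintype n] [RCLike 𝕜] [DecidableEq n]
    {A : Matrix n n 𝕜} (hA : Matrix.PosSemidef A) : Matrix n n 𝕜 :=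
  hA.1.eigenvectorUnitary.1 * Matrix.diagonal ((↑) ∘ (Real.sqrt ∘ hA.1.eigenvalues)) *
    (star hA.1.eigenvectorUnitary : Matrix n n 𝕜)

/-- Trace norm (Schatten 1-norm): `Tr √(XᴴX)`. -/
noncomputable def traceNorm {m n : Type*} [Fintype m] [Fintype n] [DecidableEq n]
    (X : Matrix m n ℂ) : ℝ :=
  ((Matrix.posSemidef_conjTranspose_mul_self X).sqrt.trace).re

/-! For `w ⊥ v` the quadratic form of `M = |v⟩⟨v| − A` is `−⟨w, A w⟩ ≤ 0`, so `M` is negative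
semidefinite on a hyperplane and therefore has at most one positive eigenvalue; hence its
positive part `M⁺ = cfc (·⁺) M` has rank at most one. As `Tr M = 1 − 1 = 0`, the eigenvalues
of `M` sum to zero: `‖M‖₁ = ∑ |λᵢ| = 2 ∑ λᵢ⁺`, while `∑ λᵢ⁺ = ∑ λᵢ⁻` bounds every `|λᵢ|` and,
having at most one nonzero term, is itself some `|λᵢ|` (or `0`). -/

open scoped MatrixOrder

namespace Matrix

variable {n 𝕜 : Type*} [Fintype n] [RCLike 𝕜]

lemma trace_vecMulVec_star_self (v : n → 𝕜) :
    (vecMulVec v (star v)).trace = ((∑ i, ‖v i‖ ^ 2 : ℝ) : 𝕜) := by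
  simp [trace_vecMulVec, dotProduct, RCLike.mul_conj]

lemma PosSemidef.dotProduct_mulVec_vecMulVec_star_sub_nonpos {A : Matrix n n 𝕜}
    (hA : A.PosSemidef) {v w : n → 𝕜} (hw : star v ⬝ᵥ w = 0) :
    star w ⬝ᵥ ((vecMulVec v (star v) - A) *ᵥ w) ≤ 0 := by
  rw [sub_mulVec, vecMulVec_mulVec, hw]
  simpa using hA.dotProduct_mulVec_nonneg w

variable [DecidableEq n]

lemma PosSemidef.sqrt_eq_cfcSqrt {A : Matrix n n 𝕜} (hA : A.PosSemidef) :
    hA.sqrt = CFC.sqrt A := by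
  rw [CFC.sqrt_eq_cfc, cfc_nnreal_eq_real _ A hA.nonneg, hA.1.cfc_eq]
  simp only [IsHermitian.cfc, Unitary.conjStarAlgAut_apply, PosSemidef.sqrt]
  congr 3
  funext i
  simp [max_eq_left (hA.eigenvalues_nonneg i)]

namespace IsHermitian

variable {A : Matrix n n 𝕜} (hA : A.IsHermitian)
include hA

lemma trace_cfc (f : ℝ → ℝ) : (cfc f A).trace = ∑ i, (f (hA.eigenvalues i) : 𝕜) := by
  rw [hA.cfc_eq, IsHermitian.cfc, Unitary.conjStarAlgAut_apply, trace_mul_cycle,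
    Unitary.coe_star_mul_self, one_mul, trace_diagonal]
  rfl

lemma rank_cfc (f : ℝ → ℝ) :
    (cfc f A).rank = Fintype.card {i // f (hA.eigenvalues i) ≠ 0} := by
  rw [hA.cfc_eq, IsHermitian.cfc, Unitary.conjStarAlgAut_apply, ← Unitary.coe_star]
  simp [-isUnit_iff_ne_zero, -Unitary.coe_star, rank_diagonal]

lemma rank_posPart : A⁺.rank = Fintype.card {i // 0 < hA.eigenvalues i} := by
  rw [CFC.posPart_def, cfcₙ_eq_cfc, hA.rank_cfc]
  simp only [ne_eq, posPart_eq_zero, not_le]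

lemma star_eigenvectorBasis_dotProduct (i j : n) :
    star ⇑(hA.eigenvectorBasis i) ⬝ᵥ ⇑(hA.eigenvectorBasis j) = if i = j then 1 else 0 := by
  rw [dotProduct_comm, ← EuclideanSpace.inner_eq_star_dotProduct]
  exact orthonormal_iff_ite.mp hA.eigenvectorBasis.orthonormal i j

lemma dotProduct_mulVec_smul_eigenvectorBasis_add {i j : n} (hij : i ≠ j) (a b : 𝕜) :
    star (a • ⇑(hA.eigenvectorBasis i) + b • ⇑(hA.eigenvectorBasis j)) ⬝ᵥ
        (A *ᵥ (a • ⇑(hA.eigenvectorBasis i) + b • ⇑(hA.eigenvectorBasis j))) =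
      ((hA.eigenvalues i * ‖a‖ ^ 2 + hA.eigenvalues j * ‖b‖ ^ 2 : ℝ) : 𝕜) := by
  simp only [mulVec_add, mulVec_smul, hA.mulVec_eigenvectorBasis, star_add, star_smul,
    add_dotProduct, dotProduct_add, smul_dotProduct, dotProduct_smul,
    hA.star_eigenvectorBasis_dotProduct, if_neg hij, if_neg hij.symm]
  simp only [RCLike.real_smul_eq_coe_smul (K := 𝕜), smul_eq_mul, RCLike.star_def]
  push_cast
  simp only [← RCLike.conj_mul]
  ring

/-- Two eigenvectors for positive eigenvalues would span a plane meeting the hyperplane `v⊥` in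
a nonzero vector, on which the form is positive. -/
lemma subsingleton_eigenvalues_pos_of_dotProduct_mulVec_nonpos {v : n → 𝕜}
    (hv : ∀ w, star v ⬝ᵥ w = 0 → star w ⬝ᵥ (A *ᵥ w) ≤ 0) :
    {i | 0 < hA.eigenvalues i}.Subsingleton := by
  intro i (hi : 0 < hA.eigenvalues i) j (hj : 0 < hA.eigenvalues j)
  by_contra hij
  set u := hA.eigenvectorBasis
  obtain ⟨a, b, hab, hw⟩ : ∃ a b : 𝕜, (a ≠ 0 ∨ b ≠ 0) ∧
      star v ⬝ᵥ (a • ⇑(u i) + b • ⇑(u j)) = 0 := by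
    by_cases hvi : star v ⬝ᵥ ⇑(u i) = 0
    · exact ⟨1, 0, Or.inl one_ne_zero, by simp [hvi]⟩
    · refine ⟨star v ⬝ᵥ ⇑(u j), -(star v ⬝ᵥ ⇑(u i)), Or.inr (neg_ne_zero.2 hvi), ?_⟩
      simp only [dotProduct_add, dotProduct_smul, smul_eq_mul]
      ring
  have hform : 0 < hA.eigenvalues i * ‖a‖ ^ 2 + hA.eigenvalues j * ‖b‖ ^ 2 := by
    rcases hab with ha | hb <;> positivity
  have hnonpos := hv _ hw
  rw [hA.dotProduct_mulVec_smul_eigenvectorBasis_add hij, RCLike.ofReal_nonpos] at hnonpos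
  exact hnonpos.not_gt hform

end IsHermitian

end Matrix

open Matrix in
lemma traceNorm_eq_sum_abs_eigenvalues {n : Type*} [Fintype n] [DecidableEq n]
    {M : Matrix n n ℂ} (hM : M.IsHermitian) : traceNorm M = ∑ i, |hM.eigenvalues i| := by
  have hsqrt : (posSemidef_conjTranspose_mul_self M).sqrt = cfc (‖·‖) M := by
    rw [PosSemidef.sqrt_eq_cfcSqrt, ← CFC.abs_eq_cfc_norm M hM.isSelfAdjoint]
    rfl
  simp [traceNorm, hsqrt, hM.trace_cfc, Complex.re_sum]

lemma sum_abs_eq_two_mul_iSup_abs {ι : Type*} [Fintype ι] {l : ι → ℝ} (hsum : ∑ i, l i = 0)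
    (hpos : {i | 0 < l i}.Subsingleton) : ∑ i, |l i| = 2 * ⨆ i, |l i| := by
  have hbdd : BddAbove (Set.range fun i => |l i|) := (Set.finite_range _).bddAbove
  have hparts : ∑ i, (l i)⁻ = ∑ i, (l i)⁺ := by
    have := Finset.sum_sub_distrib (s := Finset.univ) (fun i => (l i)⁺) (fun i => (l i)⁻)
    simp only [posPart_sub_negPart, hsum] at this
    linarith
  have hsum_abs : ∑ i, |l i| = 2 * ∑ i, (l i)⁺ := by
    simp only [← posPart_add_negPart, Finset.sum_add_distrib, hparts]
    ring
  have hle : ∀ i, |l i| ≤ ∑ j, (l j)⁺ := by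
    intro i
    rw [abs_le']
    constructor
    · exact (le_posPart (l i)).trans
        (Finset.single_le_sum (fun j _ => posPart_nonneg (l j)) (Finset.mem_univ i))
    · rw [← hparts]
      exact (neg_le_negPart (l i)).trans
        (Finset.single_le_sum (fun j _ => negPart_nonneg (l j)) (Finset.mem_univ i))
  have hge : ∑ j, (l j)⁺ ≤ ⨆ i, |l i| := by
    by_cases hex : ∃ i, 0 < l i
    · obtain ⟨i, hi⟩ := hex
      rw [Finset.sum_eq_single_of_mem i (Finset.mem_univ i) fun j _ hji =>
        posPart_eq_zero.2 (not_lt.1 fun hj => hji (hpos hj hi)), posPart_of_nonneg hi.le]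
      exact (le_abs_self _).trans (le_ciSup hbdd i)
    · simp only [not_exists, not_lt] at hex
      rw [Finset.sum_eq_zero fun i _ => posPart_eq_zero.2 (hex i)]
      exact Real.iSup_nonneg fun i => abs_nonneg _
  have hsum_nonneg : 0 ≤ ∑ j, (l j)⁺ := Finset.sum_nonneg fun j _ => posPart_nonneg _
  rw [hsum_abs, le_antisymm (Real.iSup_le hle hsum_nonneg) hge]

/-- if `|v⟩` is a unit vector and `A` is PSD with `Tr A = 1`, then the
positive part of `|v⟩⟨v| − A` has rank at most 1, and consequently
`‖|v⟩⟨v| − A‖₁ = 2 ‖|v⟩⟨v| − A‖_∞` (the operator norm of a Hermitian matrix being the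
largest absolute value of an eigenvalue). -/
theorem traceNorm_proj_sub_posSemidef {d : ℕ}
    (v : Fin d → ℂ) (hv : ∑ i, ‖v i‖^2 = 1)
    (A : Matrix (Fin d) (Fin d) ℂ) (hA : A.PosSemidef) (hAtr : A.trace = 1) :
    (∃ P N : Matrix (Fin d) (Fin d) ℂ, P.PosSemidef ∧ N.PosSemidef ∧
        Matrix.vecMulVec v (star v) - A = P - N ∧ P * N = 0 ∧ P.rank ≤ 1) ∧
    ∀ (hH : (Matrix.vecMulVec v (star v) - A).IsHermitian),
      traceNorm (Matrix.vecMulVec v (star v) - A) = 2 * ⨆ i, |hH.eigenvalues i| := by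
  have hM : (vecMulVec v (star v) - A).IsHermitian := .sub (by simp [IsHermitian]) hA.1
  have hpos : {i | 0 < hM.eigenvalues i}.Subsingleton :=
    hM.subsingleton_eigenvalues_pos_of_dotProduct_mulVec_nonpos fun _ =>
      hA.dotProduct_mulVec_vecMulVec_star_sub_nonpos
  refine ⟨⟨_⁺, _⁻, (CFC.posPart_nonneg _).posSemidef, (CFC.negPart_nonneg _).posSemidef,
    (CFC.posPart_sub_negPart _ hM.isSelfAdjoint).symm, CFC.posPart_mul_negPart _, ?_⟩,
    fun hH => ?_⟩
  · rw [hM.rank_posPart]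
    exact Fintype.card_le_one_iff_subsingleton.2 hpos.coe_sort
  · have htr : ∑ i, hH.eigenvalues i = 0 := by
      have := hH.trace_eq_sum_eigenvalues
      rw [trace_sub, hAtr, trace_vecMulVec_star_self, hv, RCLike.ofReal_one, sub_self,
        ← RCLike.ofReal_sum] at this
      exact RCLike.ofReal_eq_zero.1 this.symm
    rw [traceNorm_eq_sum_abs_eigenvalues hH]
    exact sum_abs_eq_two_mul_iSup_abs htr hpos
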